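/- With J'(I) the CA-ML instance constructed from a restricted SMTI instance I as described (with credits of the form 1 + kε, ε = 1/n), I admits a complete weakly stable matching if and only if J'(I) admits a course-complete first-coalition-stable matching; the same equivalence holds with pair-size-stable in place of first-coalition-stable. -/
import Mathlib

open Finset

/-- An instance of the Course Allocation problem: students `S`, courses `C`,
mutual acceptability `acc`, strict preferences of students over (acceptable) courses
and of courses over (acceptable) students, positive credits, upper quotas and credit limits. -/
structure CA (S C : Type*) where
  acc : S → C → Prop
  sPref : S → C → C → Prop
  cPref : C → S → S → Prop
  credits : C → ℚ
  quota : C → ℕ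
  limit : S → ℚ
  credits_pos : ∀ c, 0 < credits c
  sPref_irrefl : ∀ s c, ¬ sPref s c c
  sPref_trans : ∀ s c₁ c₂ c₃, sPref s c₁ c₂ → sPref s c₂ c₃ → sPref s c₁ c₃
  sPref_total : ∀ s c₁ c₂, acc s c₁ → acc s c₂ → c₁ ≠ c₂ → sPref s c₁ c₂ ∨ sPref s c₂ c₁
  cPref_irrefl : ∀ c s, ¬ cPref c s s
  cPref_trans : ∀ c s₁ s₂ s₃, cPref c s₁ s₂ → cPref c s₂ s₃ → cPref c s₁ s₃
  cPref_total : ∀ c s₁ s₂, acc s₁ c → acc s₂ c → s₁ ≠ s₂ → cPref c s₁ s₂ ∨ cPref c s₂ s₁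

section CourseAllocation

variable {S C : Type*} [DecidableEq S] [DecidableEq C]

/-- The set `C_M(s)` of courses assigned to student `s` in assignment `M`. -/
def CM (M : Finset (S × C)) (s : S) : Finset C :=
  (M.filter fun p => p.1 = s).image Prod.snd

/-- The set `S_M(c)` of students assigned to course `c` in assignment `M`. -/
def SM (M : Finset (S × C)) (c : C) : Finset S :=
  (M.filter fun p => p.2 = c).image Prod.fst

/-- The total number of credits `O(D)` of a set of courses `D`. -/
def CA.O (I : CA S C) (D : Finset C) : ℚ := ∑ c ∈ D, I.credits c

/-- `M` is a matching: all pairs acceptable, credit limits and upper quotas respected. -/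
def CA.IsMatching (I : CA S C) (M : Finset (S × C)) : Prop :=
  (∀ p ∈ M, I.acc p.1 p.2) ∧
  (∀ s, I.O (CM M s) ≤ I.limit s) ∧
  (∀ c, (SM M c).card ≤ I.quota c)

/-- Feasibility of a matching with respect to families `F` of feasible course sets. -/
def Feasible (F : S → Set (Finset C)) (M : Finset (S × C)) : Prop :=
  ∀ s, CM M s ∈ F s

/-- `F` is a family of downward-feasible constraints: every feasible set consists of
acceptable courses, and subsets of feasible sets are feasible. -/
def CA.DownwardFeasible (I : CA S C) (F : S → Set (Finset C)) : Prop :=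
  (∀ s, ∀ D ∈ F s, ∀ c ∈ D, I.acc s c) ∧
  (∀ s, ∀ D ∈ F s, ∀ D' ⊆ D, D' ∈ F s)

/-- Absent downward-feasible constraints (every set of courses feasible). -/
def noF : S → Set (Finset C) := fun _ => Set.univ

/-- Condition (1) of all blocking definitions: course `c` is undersubscribed in `M`
or prefers `s` to one of its assigned students. -/
def CA.Wants (I : CA S C) (M : Finset (S × C)) (s : S) (c : C) : Prop :=
  (SM M c).card < I.quota c ∨ ∃ s' ∈ SM M c, I.cPref c s s'

/-- `(s, c)` is a blocking pair of `M` (w.r.t. feasibility constraints `F`). -/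
def CA.BlockingPair (I : CA S C) (F : S → Set (Finset C)) (M : Finset (S × C))
    (s : S) (c : C) : Prop :=
  I.acc s c ∧ (s, c) ∉ M ∧ I.Wants M s c ∧
  ∃ D ⊆ CM M s, (∀ c' ∈ D, I.sPref s c c') ∧
    I.O (CM M s) - I.O D + I.credits c ≤ I.limit s ∧
    (CM M s \ D) ∪ {c} ∈ F s

def CA.PairStable (I : CA S C) (F : S → Set (Finset C)) (M : Finset (S × C)) : Prop :=
  ∀ s c, ¬ I.BlockingPair F M s c

/-- `(s, c)` is a size-blocking pair of `M`: like a blocking pair, but additionally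
the dropped set `D` must satisfy `O(D) ≤ O(c)`. -/
def CA.SizeBlockingPair (I : CA S C) (F : S → Set (Finset C)) (M : Finset (S × C))
    (s : S) (c : C) : Prop :=
  I.acc s c ∧ (s, c) ∉ M ∧ I.Wants M s c ∧
  ∃ D ⊆ CM M s, (∀ c' ∈ D, I.sPref s c c') ∧ I.O D ≤ I.credits c ∧
    I.O (CM M s) - I.O D + I.credits c ≤ I.limit s ∧
    (CM M s \ D) ∪ {c} ∈ F s

def CA.PairSizeStable (I : CA S C) (F : S → Set (Finset C)) (M : Finset (S × C)) : Prop :=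
  ∀ s c, ¬ I.SizeBlockingPair F M s c

/-- `(s, B)` is a blocking coalition of `M`. -/
def CA.BlockingCoalition (I : CA S C) (F : S → Set (Finset C)) (M : Finset (S × C))
    (s : S) (B : Finset C) : Prop :=
  B.Nonempty ∧ (∀ c ∈ B, I.acc s c ∧ (s, c) ∉ M) ∧ (∀ c ∈ B, I.Wants M s c) ∧
  ∃ D ⊆ CM M s, (∀ c ∈ B, ∀ c' ∈ D, I.sPref s c c') ∧ I.O D ≤ I.O B ∧
    I.O (CM M s) - I.O D + I.O B ≤ I.limit s ∧
    (CM M s \ D) ∪ B ∈ F s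

def CA.CoalitionStable (I : CA S C) (F : S → Set (Finset C)) (M : Finset (S × C)) : Prop :=
  ∀ s B, ¬ I.BlockingCoalition F M s B

/-- `(s, B)` is a first-blocking coalition of `M`: as a blocking coalition, except that
`s` need only prefer her most-preferred course of `B` to her most-preferred course of `D`
(equivalently, some course of `B` is preferred to every course of `D`; vacuous if `D = ∅`). -/
def CA.FirstBlockingCoalition (I : CA S C) (F : S → Set (Finset C)) (M : Finset (S × C))
    (s : S) (B : Finset C) : Prop :=
  B.Nonempty ∧ (∀ c ∈ B, I.acc s c ∧ (s, c) ∉ M) ∧ (∀ c ∈ B, I.Wants M s c) ∧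
  ∃ D ⊆ CM M s, (∃ b ∈ B, ∀ c' ∈ D, I.sPref s b c') ∧ I.O D ≤ I.O B ∧
    I.O (CM M s) - I.O D + I.O B ≤ I.limit s ∧
    (CM M s \ D) ∪ B ∈ F s

def CA.FirstCoalitionStable (I : CA S C) (F : S → Set (Finset C)) (M : Finset (S × C)) : Prop :=
  ∀ s B, ¬ I.FirstBlockingCoalition F M s B

/-- Every course exactly fills its upper quota. -/
def CA.CourseComplete (I : CA S C) (M : Finset (S × C)) : Prop :=
  ∀ c, (SM M c).card = I.quota c

/-- Every student takes as many credits as her credit limit. -/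
def CA.StudentComplete (I : CA S C) (M : Finset (S × C)) : Prop :=
  ∀ s, I.O (CM M s) = I.limit s

/-- The size of a matching: total number of credits taken by all students. -/
def CA.size [Fintype S] (I : CA S C) (M : Finset (S × C)) : ℚ :=
  ∑ s : S, I.O (CM M s)

/-- `ml` is a master list of students for the instance `I`: a strict total order on
students with which every course's preferences are consistent. -/
def CA.MasterList (I : CA S C) (ml : S → S → Prop) : Prop :=
  (∀ s, ¬ ml s s) ∧ (∀ s₁ s₂ s₃, ml s₁ s₂ → ml s₂ s₃ → ml s₁ s₃) ∧
  (∀ s₁ s₂, s₁ ≠ s₂ → ml s₁ s₂ ∨ ml s₂ s₁) ∧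
  (∀ c s s', I.acc s c → I.acc s' c → (I.cPref c s s' ↔ ml s s'))

end CourseAllocation
/-- Builds a `CA` instance from rank functions (smaller rank = more preferred), with a fixed
injective tie-breaking that never fires when ranks are distinct on acceptable pairs. -/
def CA.ofRanks {S C : Type*} (acc : S → C → Prop) (srank : S → C → ℕ) (crank : C → S → ℕ)
    (iS : S → ℕ) (iC : C → ℕ) (hiS : Function.Injective iS) (hiC : Function.Injective iC)
    (credits : C → ℚ) (quota : C → ℕ) (limit : S → ℚ) (hpos : ∀ c, 0 < credits c) :
    CA S C where
  acc := acc
  sPref s c c' := acc s c ∧ acc s c' ∧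
    (srank s c < srank s c' ∨ (srank s c = srank s c' ∧ iC c < iC c'))
  cPref c s s' := acc s c ∧ acc s' c ∧
    (crank c s < crank c s' ∨ (crank c s = crank c s' ∧ iS s < iS s'))
  credits := credits
  quota := quota
  limit := limit
  credits_pos := hpos
  sPref_irrefl := by rintro s c ⟨-, -, h⟩; omega
  sPref_trans := by rintro s c₁ c₂ c₃ ⟨h1, -, ha⟩ ⟨-, h2, hb⟩; exact ⟨h1, h2, by omega⟩
  sPref_total := by
    intro s c₁ c₂ h1 h2 hne
    have hi : iC c₁ ≠ iC c₂ := fun h => hne (hiC h)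
    rcases Nat.lt_trichotomy (srank s c₁) (srank s c₂) with h | h | h
    · exact Or.inl ⟨h1, h2, Or.inl h⟩
    · rcases Nat.lt_or_ge (iC c₁) (iC c₂) with h' | h'
      · exact Or.inl ⟨h1, h2, Or.inr ⟨h, h'⟩⟩
      · exact Or.inr ⟨h2, h1, Or.inr ⟨h.symm, by omega⟩⟩
    · exact Or.inr ⟨h2, h1, Or.inl h⟩
  cPref_irrefl := by rintro c s ⟨-, -, h⟩; omega
  cPref_trans := by rintro c s₁ s₂ s₃ ⟨h1, -, ha⟩ ⟨-, h2, hb⟩; exact ⟨h1, h2, by omega⟩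
  cPref_total := by
    intro c s₁ s₂ h1 h2 hne
    have hi : iS s₁ ≠ iS s₂ := fun h => hne (hiS h)
    rcases Nat.lt_trichotomy (crank c s₁) (crank c s₂) with h | h | h
    · exact Or.inl ⟨h1, h2, Or.inl h⟩
    · rcases Nat.lt_or_ge (iS s₁) (iS s₂) with h' | h'
      · exact Or.inl ⟨h1, h2, Or.inr ⟨h, h'⟩⟩
      · exact Or.inr ⟨h2, h1, Or.inr ⟨h.symm, by omega⟩⟩
    · exact Or.inr ⟨h2, h1, Or.inl h⟩
/-- A restricted SMTI instance: `n` men and `n` women (both indexed by `Fin n`), with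
mutual acceptability `acc m w`, a strict master list of men given by the injective
ranking `mrank`, and a master list of women with ties given by the ranking `wrank`,
where ties (classes of equal `wrank`) have length at most 2, encoded by the tie-partner
involution `twin` (`twin j = j` exactly when `w_j` is not in a tie).  Every agent's
preference list is the restriction of the other side's master list to her/his
acceptable set. -/
structure RSMTI (n : ℕ) where
  acc : Fin n → Fin n → Prop
  mrank : Fin n → Fin n
  mrank_inj : Function.Injective mrank
  wrank : Fin n → ℕ
  twin : Fin n → Fin n
  twin_invol : ∀ j, twin (twin j) = j
  wrank_eq_iff : ∀ j k, wrank j = wrank k ↔ (k = j ∨ k = twin j)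

/-- `σ` is a complete weakly stable matching of the restricted SMTI instance `I`:
it is a bijection between men and women along acceptable pairs, and no acceptable
pair `(m, w)` exists where both `m` and `w` strictly prefer each other to their
partners (men's preferences come from the women's master list `wrank`, women's
preferences from the men's master list `mrank`). -/
def RSMTI.CompleteWeaklyStable {n : ℕ} (I : RSMTI n) (σ : Equiv.Perm (Fin n)) : Prop :=
  (∀ m, I.acc m (σ m)) ∧
  ∀ m w, ¬ (I.acc m w ∧ σ m ≠ w ∧
    I.wrank w < I.wrank (σ m) ∧ I.mrank m < I.mrank (σ.symm w))

/-- Woman `w_j` is tied in the women's master list and is the designated member of her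
tie (the one whose course gets 1 credit, together with a twin 1-credit course). -/
def RSMTI.des {n : ℕ} (I : RSMTI n) (j : Fin n) : Prop :=
  I.twin j ≠ j ∧ j < I.twin j

instance {n : ℕ} (I : RSMTI n) (j : Fin n) : Decidable (I.des j) :=
  inferInstanceAs (Decidable (I.twin j ≠ j ∧ j < I.twin j))
/-- The CA-ML instance `J'(I)` of Statement 15, built from the restricted SMTI instance
`I` together with a listing of the courses consistent with the course master list: `pos j`
is the (0-indexed) position of course `c_j` in that listing.  Each woman `w_j` becomes a
course `c_j` with upper quota 1 and, with `ε = 1/n`, credits `1 + (n - p)·ε` where `p` is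
the position of `c_j` after swapping the credits of the two members of each tied pair
(so `c_j` gets the credits computed from its tie-partner's position; for untied women
`twin j = j` and no swap occurs).  Each man `m_i` becomes a student `s_i` with credit
limit `1 + n·ε`, whose preference list ranks courses by position (which breaks each tie
so that the course with fewer credits comes first); courses rank students by the men's
master list. -/
def RSMTI.J' {n : ℕ} (I : RSMTI n) (pos : Fin n → Fin n) : CA (Fin n) (Fin n) :=
  CA.ofRanks I.acc
    (fun _ j => ((pos j : ℕ)))
    (fun _ m => ((I.mrank m : ℕ)))
    Encodable.encode Encodable.encode Encodable.encode_injective Encodable.encode_injective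
    (fun j => 1 + ((n : ℚ) - ((pos (I.twin j) : ℕ) : ℚ)) * (n : ℚ)⁻¹)
    (fun _ => 1)
    (fun _ => 1 + (n : ℚ) * (n : ℚ)⁻¹)
    (by
      intro j
      have hn : 0 < n := j.pos
      have h1 : ((pos (I.twin j) : ℕ) : ℚ) < (n : ℚ) := by exact_mod_cast (pos (I.twin j)).isLt
      have h2 : (0 : ℚ) < (n : ℚ)⁻¹ := inv_pos.mpr (by exact_mod_cast hn)
      have h3 : (0 : ℚ) < ((n : ℚ) - ((pos (I.twin j) : ℕ) : ℚ)) * (n : ℚ)⁻¹ :=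
        mul_pos (by linarith) h2
      linarith)

section Aux

variable {n : ℕ} (I : RSMTI n) (pos : Fin n → Fin n)

lemma RSMTI.wrank_twin (j : Fin n) : I.wrank (I.twin j) = I.wrank j :=
  ((I.wrank_eq_iff j (I.twin j)).mpr (Or.inr rfl)).symm

lemma aux_mem_CM {S C : Type*} [DecidableEq S] [DecidableEq C]
    {M : Finset (S × C)} {s : S} {c : C} : c ∈ CM M s ↔ (s, c) ∈ M := by
  simp only [CM, Finset.mem_image, Finset.mem_filter]
  constructor
  · rintro ⟨⟨a, b⟩, ⟨hm, rfl⟩, rfl⟩; exact hm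
  · intro h; exact ⟨(s, c), ⟨h, rfl⟩, rfl⟩

lemma aux_mem_SM {S C : Type*} [DecidableEq S] [DecidableEq C]
    {M : Finset (S × C)} {s : S} {c : C} : s ∈ SM M c ↔ (s, c) ∈ M := by
  simp only [SM, Finset.mem_image, Finset.mem_filter]
  constructor
  · rintro ⟨⟨a, b⟩, ⟨hm, rfl⟩, rfl⟩; exact hm
  · intro h; exact ⟨(s, c), ⟨h, rfl⟩, rfl⟩

lemma aux_O_singleton (c : Fin n) : (I.J' pos).O {c} = (I.J' pos).credits c := by
  simp [CA.O]

lemma aux_O_mono {D E : Finset (Fin n)} (h : D ⊆ E) :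
    (I.J' pos).O D ≤ (I.J' pos).O E :=
  Finset.sum_le_sum_of_subset_of_nonneg h
    (fun i _ _ => le_of_lt ((I.J' pos).credits_pos i))

lemma aux_limit (hn : 0 < n) (s : Fin n) : (I.J' pos).limit s = 2 := by
  show 1 + (n : ℚ) * (n : ℚ)⁻¹ = 2
  rw [mul_inv_cancel₀ (by exact_mod_cast hn.ne' : (n : ℚ) ≠ 0)]
  norm_num

lemma aux_one_lt_credits (hn : 0 < n) (j : Fin n) : 1 < (I.J' pos).credits j := by
  show (1 : ℚ) < 1 + ((n : ℚ) - ((pos (I.twin j) : ℕ) : ℚ)) * (n : ℚ)⁻¹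
  have h1 : ((pos (I.twin j) : ℕ) : ℚ) < (n : ℚ) := by exact_mod_cast (pos (I.twin j)).isLt
  have h2 : (0 : ℚ) < (n : ℚ)⁻¹ := inv_pos.mpr (by exact_mod_cast hn)
  nlinarith

lemma aux_credits_le_limit (j s : Fin n) :
    (I.J' pos).credits j ≤ (I.J' pos).limit s := by
  show 1 + ((n : ℚ) - ((pos (I.twin j) : ℕ) : ℚ)) * (n : ℚ)⁻¹ ≤ 1 + (n : ℚ) * (n : ℚ)⁻¹
  have h2 : (0 : ℚ) ≤ (n : ℚ)⁻¹ := by positivity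
  have h3 : (0 : ℚ) ≤ ((pos (I.twin j) : ℕ) : ℚ) := Nat.cast_nonneg _
  nlinarith

lemma aux_credits_le_iff (hn : 0 < n) (j k : Fin n) :
    (I.J' pos).credits j ≤ (I.J' pos).credits k ↔
      (pos (I.twin k) : ℕ) ≤ (pos (I.twin j) : ℕ) := by
  show 1 + ((n : ℚ) - ((pos (I.twin j) : ℕ) : ℚ)) * (n : ℚ)⁻¹ ≤
      1 + ((n : ℚ) - ((pos (I.twin k) : ℕ) : ℚ)) * (n : ℚ)⁻¹ ↔ _
  have h2 : (0 : ℚ) < (n : ℚ)⁻¹ := inv_pos.mpr (by exact_mod_cast hn)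
  constructor
  · intro h
    by_contra hc
    push_neg at hc
    have : ((pos (I.twin j) : ℕ) : ℚ) < ((pos (I.twin k) : ℕ) : ℚ) := by exact_mod_cast hc
    nlinarith
  · intro h
    have : ((pos (I.twin k) : ℕ) : ℚ) ≤ ((pos (I.twin j) : ℕ) : ℚ) := by exact_mod_cast h
    nlinarith

lemma aux_sPref_iff (hinj : Function.Injective pos) {s c c' : Fin n} (hne : c ≠ c') :
    (I.J' pos).sPref s c c' ↔ I.acc s c ∧ I.acc s c' ∧ (pos c : ℕ) < (pos c' : ℕ) := by
  constructor
  · rintro ⟨h1, h2, h3 | ⟨h3, -⟩⟩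
    · exact ⟨h1, h2, h3⟩
    · exact absurd (hinj (Fin.val_injective h3)) hne
  · rintro ⟨h1, h2, h3⟩; exact ⟨h1, h2, Or.inl h3⟩

lemma aux_cPref_iff {s s' c : Fin n} (hne : s ≠ s') :
    (I.J' pos).cPref c s s' ↔ I.acc s c ∧ I.acc s' c ∧ (I.mrank s : ℕ) < (I.mrank s' : ℕ) := by
  constructor
  · rintro ⟨h1, h2, h3 | ⟨h3, -⟩⟩
    · exact ⟨h1, h2, h3⟩
    · exact absurd (I.mrank_inj (Fin.val_injective h3)) hne
  · rintro ⟨h1, h2, h3⟩; exact ⟨h1, h2, Or.inl h3⟩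

lemma aux_wrank_lt (hmono : ∀ j k, I.wrank j < I.wrank k → pos j < pos k)
    {c c' : Fin n} (hne : c ≠ c') (hlt : (pos c : ℕ) < (pos c' : ℕ))
    (htw : (pos (I.twin c) : ℕ) ≤ (pos (I.twin c') : ℕ)) :
    I.wrank c < I.wrank c' := by
  rcases lt_trichotomy (I.wrank c) (I.wrank c') with h | h | h
  · exact h
  · rcases (I.wrank_eq_iff c c').mp h with h' | h'
    · exact absurd h'.symm hne
    · subst h'
      rw [I.twin_invol] at htw
      omega
  · have := hmono _ _ h
    omega

lemma aux_CM_card_le_one (hn : 0 < n) {M : Finset (Fin n × Fin n)}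
    (hM : (I.J' pos).IsMatching M) (s : Fin n) : (CM M s).card ≤ 1 := by
  by_contra h
  push_neg at h
  obtain ⟨c1, hc1, c2, hc2, hne⟩ := Finset.one_lt_card.mp h
  have hsub : {c1, c2} ⊆ CM M s := by
    intro x hx
    rcases Finset.mem_insert.mp hx with rfl | hx
    · exact hc1
    · rwa [Finset.mem_singleton.mp hx]
  have hsum : (I.J' pos).O {c1, c2} ≤ (I.J' pos).O (CM M s) := aux_O_mono I pos hsub
  have hpair : (I.J' pos).O {c1, c2} = (I.J' pos).credits c1 + (I.J' pos).credits c2 :=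
    Finset.sum_pair hne
  have hlim := hM.2.1 s
  have h1 := aux_one_lt_credits I pos hn c1
  have h2 := aux_one_lt_credits I pos hn c2
  rw [aux_limit I pos hn s] at hlim
  linarith

lemma aux_CM_image (σ : Equiv.Perm (Fin n)) (s : Fin n) :
    CM (Finset.univ.image fun m => (m, σ m)) s = {σ s} := by
  ext c
  rw [aux_mem_CM, Finset.mem_singleton]
  simp only [Finset.mem_image, Finset.mem_univ, true_and, Prod.mk.injEq]
  constructor
  · rintro ⟨m, rfl, rfl⟩; rfl
  · rintro rfl; exact ⟨s, rfl, rfl⟩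

lemma aux_SM_image (σ : Equiv.Perm (Fin n)) (c : Fin n) :
    SM (Finset.univ.image fun m => (m, σ m)) c = {σ.symm c} := by
  ext s
  rw [aux_mem_SM, Finset.mem_singleton]
  simp only [Finset.mem_image, Finset.mem_univ, true_and, Prod.mk.injEq]
  constructor
  · rintro ⟨m, rfl, rfl⟩; rw [Equiv.symm_apply_apply]
  · rintro rfl; exact ⟨σ.symm c, rfl, σ.apply_symm_apply c⟩

/-- Stability equivalence: first-coalition-stable ↔ pair-size-stable on `J'(I)`. -/
lemma aux_stable_iff (hn : 0 < n) (M : Finset (Fin n × Fin n)) :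
    (I.J' pos).FirstCoalitionStable noF M ↔ (I.J' pos).PairSizeStable noF M := by
  constructor
  · intro h s c hbp
    obtain ⟨hacc, hnm, hw, D, hD, hpref, hOD, hbud, -⟩ := hbp
    apply h s {c}
    refine ⟨Finset.singleton_nonempty c, ?_, ?_, D, hD, ⟨c, Finset.mem_singleton_self c, hpref⟩,
      ?_, ?_, trivial⟩
    · intro x hx; rw [Finset.mem_singleton.mp hx]; exact ⟨hacc, hnm⟩
    · intro x hx; rw [Finset.mem_singleton.mp hx]; exact hw
    · rwa [aux_O_singleton]
    · rwa [aux_O_singleton]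
  · intro h s B hbc
    obtain ⟨hne, hBm, hBw, D, hD, ⟨b, hbB, hbpref⟩, hOD, hbud, -⟩ := hbc
    have hOle : (I.J' pos).O D ≤ (I.J' pos).O (CM M s) := aux_O_mono I pos hD
    have hlim := aux_limit I pos hn s
    have hB2 : (I.J' pos).O B ≤ 2 := by linarith
    have hBsing : B = {b} := by
      have hsub : B ⊆ {b} := by
        intro x hx
        rw [Finset.mem_singleton]
        by_contra hxb
        have hsub2 : {b, x} ⊆ B := by
          intro y hy
          rcases Finset.mem_insert.mp hy with rfl | hy
          · exact hbB
          · rwa [Finset.mem_singleton.mp hy]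
        have h1 := aux_O_mono I pos hsub2
        have h2 : (I.J' pos).O {b, x} = (I.J' pos).credits b + (I.J' pos).credits x :=
          Finset.sum_pair (Ne.symm hxb)
        have h3 := aux_one_lt_credits I pos hn b
        have h4 := aux_one_lt_credits I pos hn x
        linarith
      exact Finset.Subset.antisymm hsub (Finset.singleton_subset_iff.mpr hbB)
    subst hBsing
    apply h s b
    refine ⟨(hBm b hbB).1, (hBm b hbB).2, hBw b hbB, D, hD, hbpref, ?_, ?_, trivial⟩
    · rwa [aux_O_singleton] at hOD
    · rwa [aux_O_singleton] at hbud

/-- From a complete weakly stable SMTI matching to a course-complete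
pair-size-stable matching of `J'(I)`. -/
lemma aux_forward (hn : 0 < n) (hinj : Function.Injective pos)
    (hmono : ∀ j k, I.wrank j < I.wrank k → pos j < pos k)
    (σ : Equiv.Perm (Fin n)) (hσ : I.CompleteWeaklyStable σ) :
    (I.J' pos).IsMatching (Finset.univ.image fun m => (m, σ m)) ∧
    (I.J' pos).CourseComplete (Finset.univ.image fun m => (m, σ m)) ∧
    (I.J' pos).PairSizeStable noF (Finset.univ.image fun m => (m, σ m)) := by
  set M : Finset (Fin n × Fin n) := Finset.univ.image fun m => (m, σ m) with hMdef
  have hCM : ∀ s, CM M s = {σ s} := aux_CM_image σ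
  have hSM : ∀ c, SM M c = {σ.symm c} := aux_SM_image σ
  have hmemM : ∀ m, (m, σ m) ∈ M := by
    intro m; rw [hMdef]; exact Finset.mem_image.mpr ⟨m, Finset.mem_univ m, rfl⟩
  refine ⟨⟨?_, ?_, ?_⟩, ?_, ?_⟩
  · rintro p hp
    obtain ⟨m, -, rfl⟩ := Finset.mem_image.mp hp
    exact hσ.1 m
  · intro s
    rw [hCM s, aux_O_singleton]
    exact aux_credits_le_limit I pos (σ s) s
  · intro c
    rw [hSM c, Finset.card_singleton]
    exact le_rfl
  · intro c
    rw [hSM c, Finset.card_singleton]; rfl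
  · intro s c hbp
    obtain ⟨hacc, hnm, hw, D, hD, hpref, hOD, hbud, -⟩ := hbp
    have hcne : c ≠ σ s := by
      rintro rfl; exact hnm (hmemM s)
    -- Wants gives mrank s < mrank (σ.symm c)
    have hmr : (I.mrank s : ℕ) < (I.mrank (σ.symm c) : ℕ) := by
      rcases hw with hlt | ⟨s', hs', hp⟩
      · rw [hSM c, Finset.card_singleton] at hlt
        exact absurd hlt (by norm_num [RSMTI.J', CA.ofRanks])
      · rw [hSM c, Finset.mem_singleton] at hs'
        subst hs'
        have hsne : s ≠ σ.symm c := by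
          rintro rfl
          exact hcne (σ.apply_symm_apply c).symm
        exact ((aux_cPref_iff I pos hsne).mp hp).2.2
    rw [hCM s] at hD hbud
    rcases Finset.subset_singleton_iff.mp hD with rfl | rfl
    · -- D = ∅: budget violated
      rw [aux_limit I pos hn s] at hbud
      have hO0 : (I.J' pos).O (∅ : Finset (Fin n)) = 0 := Finset.sum_empty
      rw [hO0, aux_O_singleton] at hbud
      have h1 := aux_one_lt_credits I pos hn (σ s)
      have h2 := aux_one_lt_credits I pos hn c
      linarith
    · -- D = {σ s}
      have hsp := hpref (σ s) (Finset.mem_singleton_self _)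
      have hplt : (pos c : ℕ) < (pos (σ s) : ℕ) :=
        ((aux_sPref_iff I pos hinj hcne).mp hsp).2.2
      rw [aux_O_singleton] at hOD
      have htw : (pos (I.twin c) : ℕ) ≤ (pos (I.twin (σ s)) : ℕ) :=
        (aux_credits_le_iff I pos hn (σ s) c).mp hOD
      have hwlt : I.wrank c < I.wrank (σ s) :=
        aux_wrank_lt I pos hmono hcne hplt htw
      exact hσ.2 s c ⟨hacc, hcne.symm, hwlt, hmr⟩

/-- From a course-complete pair-size-stable matching of `J'(I)` to a complete
weakly stable SMTI matching. -/
lemma aux_backward (hn : 0 < n) (hinj : Function.Injective pos)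
    (hmono : ∀ j k, I.wrank j < I.wrank k → pos j < pos k)
    (M : Finset (Fin n × Fin n)) (hM : (I.J' pos).IsMatching M)
    (hcc : (I.J' pos).CourseComplete M)
    (hst : (I.J' pos).PairSizeStable noF M) :
    ∃ σ : Equiv.Perm (Fin n), I.CompleteWeaklyStable σ := by
  have h1 : ∀ c, ∃ a, SM M c = {a} := by
    intro c
    exact Finset.card_eq_one.mp (hcc c)
  choose g hg using h1
  have hgM : ∀ c, (g c, c) ∈ M := by
    intro c
    rw [← aux_mem_SM, hg c]
    exact Finset.mem_singleton_self _
  have hginj : Function.Injective g := by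
    intro c c' hcc'
    have hc : c ∈ CM M (g c) := aux_mem_CM.mpr (hgM c)
    have hc' : c' ∈ CM M (g c) := by
      rw [hcc']; exact aux_mem_CM.mpr (hgM c')
    exact Finset.card_le_one.mp (aux_CM_card_le_one I pos hn hM (g c)) c hc c' hc'
  have hgbij : Function.Bijective g := (Finite.injective_iff_bijective).mp hginj
  set e := Equiv.ofBijective g hgbij with hedef
  set σ := e.symm with hσdef
  have hge : ∀ c, g c = e c := fun _ => rfl
  have hmemM : ∀ m, (m, σ m) ∈ M := by
    intro m
    have : g (σ m) = m := by rw [hge, hσdef, Equiv.apply_symm_apply]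
    have := hgM (σ m)
    rwa [‹g (σ m) = m›] at this
  have hCM : ∀ m, CM M m = {σ m} := by
    intro m
    apply Finset.eq_singleton_iff_unique_mem.mpr
    refine ⟨aux_mem_CM.mpr (hmemM m), ?_⟩
    intro x hx
    exact Finset.card_le_one.mp (aux_CM_card_le_one I pos hn hM m) x hx (σ m)
      (aux_mem_CM.mpr (hmemM m))
  refine ⟨σ, fun m => hM.1 (m, σ m) (hmemM m), ?_⟩
  rintro m w ⟨hacc, hne, hwr, hmr⟩
  -- build a size-blocking pair (m, w)
  apply hst m w
  have hgw : σ.symm w = g w := by rw [hσdef, Equiv.symm_symm, hge]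
  have haccσ : I.acc m (σ m) := hM.1 (m, σ m) (hmemM m)
  have haccg : I.acc (g w) w := hM.1 (g w, w) (hgM w)
  refine ⟨hacc, ?_, ?_, {σ m}, ?_, ?_, ?_, ?_, trivial⟩
  · intro hmem
    have : w ∈ CM M m := aux_mem_CM.mpr hmem
    rw [hCM m, Finset.mem_singleton] at this
    exact hne this.symm
  · -- Wants
    refine Or.inr ⟨g w, ?_, ?_⟩
    · rw [hg w]; exact Finset.mem_singleton_self _
    · refine ⟨hacc, haccg, Or.inl ?_⟩
      rw [← hgw]
      exact hmr
  · rw [hCM m]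
  · intro c' hc'
    rw [Finset.mem_singleton.mp hc']
    exact ⟨hacc, haccσ, Or.inl (hmono _ _ hwr)⟩
  · rw [aux_O_singleton]
    rw [aux_credits_le_iff I pos hn (σ m) w]
    have : I.wrank (I.twin w) < I.wrank (I.twin (σ m)) := by
      rw [I.wrank_twin, I.wrank_twin]; exact hwr
    exact le_of_lt (hmono _ _ this)
  · rw [hCM m, aux_O_singleton, sub_self, zero_add]
    exact aux_credits_le_limit I pos w m

end Aux

/-- With `J'(I)` as above (listing `pos` injective and consistent with
the women's master list), `I` admits a complete weakly stable matching iff `J'(I)` admits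
a course-complete first-coalition-stable matching; the same equivalence holds with
pair-size-stable in place of first-coalition-stable. -/
theorem completeWeaklyStable_iff_courseComplete_stable
    {n : ℕ} (hn : 0 < n) (I : RSMTI n) (pos : Fin n → Fin n)
    (hinj : Function.Injective pos)
    (hmono : ∀ j k, I.wrank j < I.wrank k → pos j < pos k) :
    ((∃ σ : Equiv.Perm (Fin n), I.CompleteWeaklyStable σ) ↔
      ∃ M : Finset (Fin n × Fin n),
        (I.J' pos).IsMatching M ∧ (I.J' pos).CourseComplete M ∧
        (I.J' pos).FirstCoalitionStable noF M) ∧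
    ((∃ σ : Equiv.Perm (Fin n), I.CompleteWeaklyStable σ) ↔
      ∃ M : Finset (Fin n × Fin n),
        (I.J' pos).IsMatching M ∧ (I.J' pos).CourseComplete M ∧
        (I.J' pos).PairSizeStable noF M) := by
  constructor
  · constructor
    · rintro ⟨σ, hσ⟩
      obtain ⟨h1, h2, h3⟩ := aux_forward I pos hn hinj hmono σ hσ
      exact ⟨_, h1, h2, (aux_stable_iff I pos hn _).mpr h3⟩
    · rintro ⟨M, h1, h2, h3⟩
      exact aux_backward I pos hn hinj hmono M h1 h2 ((aux_stable_iff I pos hn M).mp h3)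
  · constructor
    · rintro ⟨σ, hσ⟩
      obtain ⟨h1, h2, h3⟩ := aux_forward I pos hn hinj hmono σ hσ
      exact ⟨_, h1, h2, h3⟩
    · rintro ⟨M, h1, h2, h3⟩
      exact aux_backward I pos hn hinj hmono M h1 h2 h3
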